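/- Let H = {·|1} where 1 = {0|·}, and let U = D(H). Then H is Right U-strong: for every Right end X in U, necessarily of the form k·(conjugate of H) + n·1 with k, n ≥ 0, Right moving first wins H + X under misère play. -/

import Mathlib

/-- A (finite) partizan game: finite lists of Left and Right options. -/
inductive Gm : Type where
  | node : List Gm → List Gm → Gm

/-- The Left options of a game. -/
def Gm.leftOpts : Gm → List Gm
  | .node l _ => l

/-- The Right options of a game. -/
def Gm.rightOpts : Gm → List Gm
  | .node _ r => r

/-- Disjunctive sum of games. -/
def Gm.add : Gm → Gm → Gm
  | .node gl gr, .node hl hr =>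
      .node
        (gl.attach.map (fun g => Gm.add g.1 (.node hl hr)) ++
         hl.attach.map (fun h => Gm.add (.node gl gr) h.1))
        (gr.attach.map (fun g => Gm.add g.1 (.node hl hr)) ++
         hr.attach.map (fun h => Gm.add (.node gl gr) h.1))
termination_by g h => sizeOf g + sizeOf h
decreasing_by
  all_goals first
  | (have := List.sizeOf_lt_of_mem g.2; simp; omega)
  | (have := List.sizeOf_lt_of_mem h.2; simp; omega)

mutual
/-- Left, moving first, wins `G` under misère play (a player unable to move wins):
`G` is a Left end, or some Left option is a loss for Right moving first. -/
def Gm.lwins : Gm → Prop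
  | .node l _ => l = [] ∨ ∃ g ∈ l.attach, ¬ Gm.rwins g.1
termination_by G => sizeOf G
decreasing_by have := List.sizeOf_lt_of_mem g.2; simp; omega

/-- Right, moving first, wins `G` under misère play. -/
def Gm.rwins : Gm → Prop
  | .node _ r => r = [] ∨ ∃ g ∈ r.attach, ¬ Gm.lwins g.1
termination_by G => sizeOf G
decreasing_by have := List.sizeOf_lt_of_mem g.2; simp; omega
end

/-- The game `0`. -/
def Gm.zero : Gm := .node [] []

/-- The game `* = {0|0}`. -/
def Gm.star : Gm := .node [Gm.zero] [Gm.zero]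

/-- The conjugate of a game: swap the roles of Left and Right everywhere. -/
def Gm.conj : Gm → Gm
  | .node l r =>
      .node (r.attach.map (fun g => Gm.conj g.1)) (l.attach.map (fun g => Gm.conj g.1))
termination_by G => sizeOf G
decreasing_by
  all_goals (have := List.sizeOf_lt_of_mem g.2; simp; omega)

/-- `k` copies of `x`, added together. -/
def Gm.ksum : ℕ → Gm → Gm
  | 0, _ => Gm.zero
  | n+1, x => (Gm.ksum n x).add x

/-- The game `1 = {0|·}`. -/
def Gm.one : Gm := .node [Gm.zero] []

/-! Right's winning move is `H → 1`. What remains is a sum of `1`s, at least one, and copies of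
`{-1|·}`, and Left moving first loses it: moving `1 → 0` leaves a Right end, which Right wins at
once, and moving `{-1|·} → -1` is answered by `-1 → 0`, which restores the same kind of position
with one copy of `{-1|·}` fewer. -/

namespace Gm

def negOne : Gm := .node [] [zero]

lemma leftOpts_add : ∀ G H : Gm,
    (G.add H).leftOpts = G.leftOpts.map (·.add H) ++ H.leftOpts.map G.add
  | .node _ _, .node _ _ => by rw [Gm.add]; simp [leftOpts]

lemma rightOpts_add : ∀ G H : Gm,
    (G.add H).rightOpts = G.rightOpts.map (·.add H) ++ H.rightOpts.map G.add
  | .node _ _, .node _ _ => by rw [Gm.add]; simp [rightOpts]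

lemma add_mem_rightOpts_add {G H g : Gm} (hg : g ∈ G.rightOpts) :
    g.add H ∈ (G.add H).rightOpts := by
  rw [rightOpts_add]
  exact List.mem_append_left _ (List.mem_map_of_mem hg)

lemma lwins_iff (G : Gm) : G.lwins ↔ G.leftOpts = [] ∨ ∃ g ∈ G.leftOpts, ¬ g.rwins := by
  obtain ⟨l, r⟩ := G
  rw [lwins]
  simp [leftOpts]

lemma rwins_iff (G : Gm) : G.rwins ↔ G.rightOpts = [] ∨ ∃ g ∈ G.rightOpts, ¬ g.lwins := by
  obtain ⟨l, r⟩ := G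
  rw [rwins]
  simp [rightOpts]

lemma rwins_of_rightOpts_eq_nil {G : Gm} (h : G.rightOpts = []) : G.rwins :=
  (rwins_iff G).2 (.inl h)

lemma rwins_of_mem_rightOpts {G g : Gm} (hg : g ∈ G.rightOpts) (h : ¬ g.lwins) : G.rwins :=
  (rwins_iff G).2 (.inr ⟨g, hg, h⟩)

lemma conj_node_nil_one : conj (.node [] [one]) = .node [negOne] [] := by
  simp only [conj, one, zero, negOne, List.attach_cons, List.attach_nil, List.map_cons,
    List.map_nil]

/-- `IsSumOf a b c G`: `G` is a disjunctive sum of `a` copies of `1`, `b` copies of `{-1|·}`,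
`c` copies of `-1`, and copies of `0`, in any order and bracketing. -/
inductive IsSumOf : ℕ → ℕ → ℕ → Gm → Prop
  | zero : IsSumOf 0 0 0 zero
  | one : IsSumOf 1 0 0 one
  | conjH : IsSumOf 0 1 0 (.node [negOne] [])
  | negOne : IsSumOf 0 0 1 negOne
  | add {a b c a' b' c' G G'} : IsSumOf a b c G → IsSumOf a' b' c' G' →
      IsSumOf (a + a') (b + b') (c + c') (G.add G')

namespace IsSumOf

variable {a b c : ℕ} {G : Gm}

lemma of_eq {a' b' c' : ℕ} (h : IsSumOf a b c G) (ha : a = a') (hb : b = b') (hc : c = c') :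
    IsSumOf a' b' c' G := by
  subst ha hb hc; exact h

lemma ksum (h : IsSumOf a b c G) (n : ℕ) : IsSumOf (n * a) (n * b) (n * c) (G.ksum n) := by
  induction n with
  | zero => exact zero.of_eq (zero_mul a).symm (zero_mul b).symm (zero_mul c).symm
  | succ n ih => exact (ih.add h).of_eq (n.succ_mul a).symm (n.succ_mul b).symm (n.succ_mul c).symm

lemma rightOpts_eq_nil (h : IsSumOf a b c G) (hc : c = 0) : G.rightOpts = [] := by
  induction h with
  | negOne => cases hc
  | add _ _ ih₁ ih₂ => rw [rightOpts_add, ih₁ (by omega), ih₂ (by omega)]; rfl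
  | _ => rfl

lemma leftOpts_ne_nil (h : IsSumOf a b c G) (ha : 0 < a) : G.leftOpts ≠ [] := by
  induction h with
  | one => simp [Gm.one, leftOpts]
  | @add a₁ _ _ _ _ _ _ _ _ _ ih₁ ih₂ =>
    rw [leftOpts_add, Ne, List.append_eq_nil_iff, List.map_eq_nil_iff, List.map_eq_nil_iff]
    rintro ⟨h₁, h₂⟩
    rcases Nat.eq_zero_or_pos a₁ with ha₁ | ha₁
    · exact ih₂ (by omega) h₂
    · exact ih₁ ha₁ h₁
  | _ => omega

lemma exists_mem_rightOpts (h : IsSumOf a b (c + 1) G) :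
    ∃ g ∈ G.rightOpts, IsSumOf a b c g := by
  generalize hc : c + 1 = c' at h
  induction h generalizing c with
  | negOne => exact ⟨Gm.zero, by simp [Gm.negOne, rightOpts], zero.of_eq rfl rfl (by omega)⟩
  | @add _ _ c₁ _ _ _ G₁ G₂ h₁ h₂ ih₁ ih₂ =>
    rcases Nat.eq_zero_or_pos c₁ with hc₁ | hc₁
    · obtain ⟨g, hg, hs⟩ := ih₂ (c := c) (by omega)
      refine ⟨G₁.add g, ?_, (h₁.add hs).of_eq rfl rfl (by omega)⟩
      rw [rightOpts_add]
      exact List.mem_append_right _ (List.mem_map_of_mem hg)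
    · obtain ⟨g, hg, hs⟩ := ih₁ (c := c₁ - 1) (by omega)
      exact ⟨g.add G₂, add_mem_rightOpts_add hg, (hs.add h₂).of_eq rfl rfl (by omega)⟩
  | _ => omega

lemma mem_leftOpts (h : IsSumOf a b c G) {g : Gm} (hg : g ∈ G.leftOpts) :
    (∃ a', a = a' + 1 ∧ IsSumOf a' b c g) ∨ (∃ b', b = b' + 1 ∧ IsSumOf a b' (c + 1) g) := by
  induction h generalizing g with
  | one => simp only [Gm.one, leftOpts, List.mem_singleton] at hg; exact .inl ⟨0, rfl, hg ▸ zero⟩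
  | conjH => simp only [leftOpts, List.mem_singleton] at hg; exact .inr ⟨0, rfl, hg ▸ negOne⟩
  | add h₁ h₂ ih₁ ih₂ =>
    rw [leftOpts_add, List.mem_append, List.mem_map, List.mem_map] at hg
    rcases hg with ⟨g, hg, rfl⟩ | ⟨g, hg, rfl⟩
    · rcases ih₁ hg with ⟨a', rfl, hs⟩ | ⟨b', rfl, hs⟩
      · exact .inl ⟨_, by omega, hs.add h₂⟩
      · exact .inr ⟨_, by omega, (hs.add h₂).of_eq rfl rfl (by omega)⟩
    · rcases ih₂ hg with ⟨a', rfl, hs⟩ | ⟨b', rfl, hs⟩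
      · exact .inl ⟨_, by omega, h₁.add hs⟩
      · exact .inr ⟨_, by omega, (h₁.add hs).of_eq rfl rfl (by omega)⟩
  | _ => simp [Gm.zero, Gm.negOne, leftOpts] at hg

theorem not_lwins (h : IsSumOf a b 0 G) (ha : 0 < a) : ¬ G.lwins := by
  induction b using Nat.strong_induction_on generalizing G with
  | _ b ih =>
    rw [lwins_iff, not_or, not_exists]
    refine ⟨h.leftOpts_ne_nil ha, fun g ⟨hg, hLg⟩ => hLg ?_⟩
    rcases h.mem_leftOpts hg with ⟨a', rfl, hs⟩ | ⟨b', rfl, hs⟩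
    · exact rwins_of_rightOpts_eq_nil (hs.rightOpts_eq_nil rfl)
    · obtain ⟨g', hg', hs'⟩ := hs.exists_mem_rightOpts
      exact rwins_of_mem_rightOpts hg' (ih b' b'.lt_succ_self hs')

end IsSumOf

end Gm

/-- let `H = {·|1}` and `U = D(H)`. Then `H` is Right `U`-strong:
for every Right end `X` of `U` (necessarily of the form
`k·(conjugate of H) + n·1`), Right moving first wins `H + X` under misère play. -/
theorem stmt16 :
    ∀ k n : ℕ,
      Gm.rwins ((Gm.node [] [Gm.one]).add
        ((Gm.ksum k (Gm.conj (Gm.node [] [Gm.one]))).add (Gm.ksum n Gm.one))) := by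
  intro k n
  set X := (Gm.ksum k (Gm.conj (.node [] [Gm.one]))).add (Gm.ksum n Gm.one) with hX_def
  have hX : Gm.IsSumOf n k 0 X := by
    rw [hX_def, Gm.conj_node_nil_one]
    exact ((Gm.IsSumOf.conjH.ksum k).add (Gm.IsSumOf.one.ksum n)).of_eq (by ring) (by ring) rfl
  have hmove : Gm.one.add X ∈ ((Gm.node [] [Gm.one]).add X).rightOpts :=
    Gm.add_mem_rightOpts_add (List.mem_singleton_self _)
  exact Gm.rwins_of_mem_rightOpts hmove ((Gm.IsSumOf.one.add hX).not_lwins (by omega))
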